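/- Let n ≥ 2 and let R > 1 be large enough that (log(R/r))² - 3·log(R/r) + 1 > 0 for all r ∈ (0,1]. Define α(r) = ((2+n)·log(R/r) - 1) / ((log(R/r))² - 3·log(R/r) + 1) and u(x) = x₁ x₂ (log(R/|x|))² for x ∈ ℝⁿ \ {0}. Then for every x with 0 < |x| < 1, the trace of (I + α(|x|)·(x/|x|) ⊗ (x/|x|)) · D²u(x) equals 0; that is, u solves the non-divergence elliptic equation L_α u = 0 in the punctured unit ball. -/

import Mathlib

/-!
Write `u = x₁x₂ φ(|x|²)` with `φ(s) = (log (R²/s))² / 4`. Since `I + α ν⊗ν = I + (α/|x|²) x⊗x`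
and `D²u` is symmetric, the trace is `Δu + (α/|x|²) D²u(x, x)`. For a coordinate monomial times a
function of `|x|²` both terms are explicit: `Δu = x₁x₂ (4|x|²φ'' + (2n+8)φ')` and
`D²u(x, x) = x₁x₂ (2φ + 10|x|²φ' + 4|x|⁴φ'')`. With `L = log (R/|x|)` these are
`x₁x₂ (2 - (2n+4)L) / |x|²` and `2x₁x₂ (L² - 3L + 1)`, and `α` is exactly the ratio that makes the
sum vanish.
-/

open Set Real Filter Topology
open scoped RealInnerProductSpace

section Radial

variable {ι : Type*} [Fintype ι]

noncomputable def coordMulRadial (a b : ι) (φ : ℝ → ℝ) (y : EuclideanSpace ℝ ι) : ℝ :=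
  y a * y b * φ (‖y‖ ^ 2)

theorem hasFDerivAt_coordMulRadial (a b : ι) {φ : ℝ → ℝ} {φ' : ℝ} {y : EuclideanSpace ℝ ι}
    (hφ : HasDerivAt φ φ' (‖y‖ ^ 2)) :
    HasFDerivAt (coordMulRadial a b φ)
      (φ (‖y‖ ^ 2) • (y b • EuclideanSpace.proj a + y a • EuclideanSpace.proj b)
        + (2 * (y a * y b) * φ') • innerSL ℝ y) y := by
  have hp := ((EuclideanSpace.proj (𝕜 := ℝ) a).hasFDerivAt (x := y)).mul
    ((EuclideanSpace.proj (𝕜 := ℝ) b).hasFDerivAt (x := y))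
  have hq := hφ.comp_hasFDerivAt y (hasStrictFDerivAt_norm_sq y).hasFDerivAt
  have h : HasFDerivAt (coordMulRadial a b φ) _ y := hp.mul hq
  refine h.congr_fderiv ?_
  ext v
  simp only [EuclideanSpace.coe_proj, Pi.mul_apply, PiLp.proj_apply, smul_add, add_apply,
    smul_apply, coe_innerSL_apply, nsmul_eq_mul, Nat.cast_ofNat, smul_eq_mul]
  ring

theorem fderiv_coordMulRadial_apply (a b : ι) {φ : ℝ → ℝ} {φ' : ℝ} {y : EuclideanSpace ℝ ι}
    (hφ : HasDerivAt φ φ' (‖y‖ ^ 2)) (v : EuclideanSpace ℝ ι) :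
    fderiv ℝ (coordMulRadial a b φ) y v =
      (v a * y b + y a * v b) * φ (‖y‖ ^ 2) + 2 * (y a * y b) * φ' * ⟪y, v⟫ := by
  rw [(hasFDerivAt_coordMulRadial a b hφ).fderiv]
  simp only [smul_add, add_apply, smul_apply, PiLp.proj_apply, smul_eq_mul, coe_innerSL_apply]
  ring

theorem fderiv_fderiv_coordMulRadial_apply (a b : ι) {φ φ' : ℝ → ℝ} {φ'' : ℝ}
    {x : EuclideanSpace ℝ ι} (hφ : ∀ᶠ s in 𝓝 (‖x‖ ^ 2), HasDerivAt φ (φ' s) s)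
    (hφ' : HasDerivAt φ' φ'' (‖x‖ ^ 2)) (v w : EuclideanSpace ℝ ι) :
    fderiv ℝ (fun y => fderiv ℝ (coordMulRadial a b φ) y v) x w =
      (v a * w b + w a * v b) * φ (‖x‖ ^ 2)
        + 2 * φ' (‖x‖ ^ 2) * ((v a * x b + x a * v b) * ⟪x, w⟫
          + (w a * x b + x a * w b) * ⟪x, v⟫ + x a * x b * ⟪w, v⟫)
        + 4 * (x a * x b) * φ'' * ⟪x, v⟫ * ⟪x, w⟫ := by
  have hev : (fun y => fderiv ℝ (coordMulRadial a b φ) y v) =ᶠ[𝓝 x] fun y =>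
      (v a * y b + y a * v b) * φ (‖y‖ ^ 2) + 2 * (y a * y b) * φ' (‖y‖ ^ 2) * ⟪y, v⟫ := by
    filter_upwards [((continuous_norm.pow 2).tendsto x).eventually hφ] with y hy
    exact fderiv_coordMulRadial_apply a b hy v
  have hproj (c : ι) := (EuclideanSpace.proj (𝕜 := ℝ) c).hasFDerivAt (x := x)
  have hnorm := (hasStrictFDerivAt_norm_sq x).hasFDerivAt
  have hg : HasFDerivAt (fun y : EuclideanSpace ℝ ι => (v a * y b + y a * v b) * φ (‖y‖ ^ 2)
      + 2 * (y a * y b) * φ' (‖y‖ ^ 2) * ⟪y, v⟫) _ x :=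
    ((((hproj b).const_mul (v a)).add ((hproj a).mul_const (v b))).mul
      (hφ.self_of_nhds.comp_hasFDerivAt x hnorm)).add
    ((((hproj a).mul (hproj b)).const_mul 2).mul (hφ'.comp_hasFDerivAt x hnorm)
      |>.mul ((hasFDerivAt_id x).inner ℝ (hasFDerivAt_const v x)))
  rw [hev.fderiv_eq, hg.fderiv]
  simp only [PiLp.proj_apply, Pi.add_apply, Function.comp_apply, smul_add, EuclideanSpace.coe_proj,
    Pi.mul_apply, id_eq, add_apply, smul_apply, coe_innerSL_apply, nsmul_eq_mul, Nat.cast_ofNat,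
    smul_eq_mul, ContinuousLinearMap.comp_apply, ContinuousLinearMap.prod_apply,
    ContinuousLinearMap.id_apply, zero_apply, fderivInnerCLM_apply, inner_zero_right, zero_add]
  ring

theorem fderiv_fderiv_coordMulRadial_comm (a b : ι) {φ φ' : ℝ → ℝ} {φ'' : ℝ}
    {x : EuclideanSpace ℝ ι} (hφ : ∀ᶠ s in 𝓝 (‖x‖ ^ 2), HasDerivAt φ (φ' s) s)
    (hφ' : HasDerivAt φ' φ'' (‖x‖ ^ 2)) (v w : EuclideanSpace ℝ ι) :
    fderiv ℝ (fun y => fderiv ℝ (coordMulRadial a b φ) y v) x w =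
      fderiv ℝ (fun y => fderiv ℝ (coordMulRadial a b φ) y w) x v := by
  rw [fderiv_fderiv_coordMulRadial_apply a b hφ hφ', fderiv_fderiv_coordMulRadial_apply a b hφ hφ',
    real_inner_comm v w]
  ring

end Radial

theorem hasDerivAt_log_const_div {c s : ℝ} (hc : c ≠ 0) (hs : s ≠ 0) :
    HasDerivAt (fun s => log (c / s)) (-s⁻¹) s := by
  have h := ((hasDerivAt_inv hs).const_mul c).log (mul_ne_zero hc (inv_ne_zero hs))
  simp only [← div_eq_mul_inv] at h
  convert h using 1
  field_simp

theorem hasDerivAt_log_const_div_sq_div_four {c s : ℝ} (hc : c ≠ 0) (hs : s ≠ 0) :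
    HasDerivAt (fun s => log (c / s) ^ 2 / 4) (-log (c / s) / (2 * s)) s := by
  have h : HasDerivAt (fun s => log (c / s) ^ 2 / 4) _ s :=
    ((hasDerivAt_log_const_div hc hs).pow 2).div_const 4
  refine h.congr_deriv ?_
  field_simp
  ring

theorem hasDerivAt_neg_log_const_div_div_two_mul {c s : ℝ} (hc : c ≠ 0) (hs : s ≠ 0) :
    HasDerivAt (fun s => -log (c / s) / (2 * s)) ((1 + log (c / s)) / (2 * s ^ 2)) s := by
  have h : HasDerivAt (fun s => -log (c / s) / (2 * s)) _ s :=
    (hasDerivAt_log_const_div hc hs).neg.div ((hasDerivAt_id s).const_mul 2)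
      (mul_ne_zero two_ne_zero hs)
  refine h.congr_deriv ?_
  simp only [Pi.neg_apply]
  field_simp
  ring

open Matrix

theorem Matrix.trace_one_add_smul_vecMulVec_mul {ι : Type*} [Fintype ι] [DecidableEq ι]
    (c : ℝ) (v : ι → ℝ) (M : Matrix ι ι ℝ) :
    trace ((1 + c • vecMulVec v v) * M) = trace M + c * (v ⬝ᵥ (v ᵥ* M)) := by
  rw [add_mul, one_mul, smul_mul, vecMulVec_mul, trace_add, trace_smul, trace_vecMulVec,
    smul_eq_mul]

section Hessian

variable {ι : Type*} [Fintype ι] [DecidableEq ι]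

theorem sum_fderiv_fderiv_coordMulRadial_single {a b : ι} (hab : a ≠ b) {φ φ' : ℝ → ℝ}
    {φ'' : ℝ} {x : EuclideanSpace ℝ ι} (hφ : ∀ᶠ s in 𝓝 (‖x‖ ^ 2), HasDerivAt φ (φ' s) s)
    (hφ' : HasDerivAt φ' φ'' (‖x‖ ^ 2)) :
    ∑ i, fderiv ℝ (fun y => fderiv ℝ (coordMulRadial a b φ) y (EuclideanSpace.single i 1)) x
        (EuclideanSpace.single i 1) =
      x a * x b * (4 * ‖x‖ ^ 2 * φ'' + (2 * Fintype.card ι + 8) * φ' (‖x‖ ^ 2)) := by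
  have hterm (i : ι) :
      fderiv ℝ (fun y => fderiv ℝ (coordMulRadial a b φ) y (EuclideanSpace.single i 1)) x
        (EuclideanSpace.single i 1) =
      2 * φ (‖x‖ ^ 2) * (EuclideanSpace.single i (1 : ℝ) a * EuclideanSpace.single i (1 : ℝ) b)
        + 4 * φ' (‖x‖ ^ 2) * (x b * (EuclideanSpace.single i (1 : ℝ) a * x i)
          + x a * (EuclideanSpace.single i (1 : ℝ) b * x i))
        + 2 * (x a * x b) * φ' (‖x‖ ^ 2) + 4 * (x a * x b) * φ'' * x i ^ 2 := by
    rw [fderiv_fderiv_coordMulRadial_apply a b hφ hφ', EuclideanSpace.inner_single_right,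
      real_inner_self_eq_norm_sq, PiLp.norm_single, norm_one]
    simp only [one_mul, conj_trivial]
    ring
  have hsingle :
      ∑ i, EuclideanSpace.single i (1 : ℝ) a * EuclideanSpace.single i (1 : ℝ) b = 0 := by
    simp [PiLp.single_apply, hab]
  have hcoord (c : ι) : ∑ i, EuclideanSpace.single i (1 : ℝ) c * x i = x c := by
    simp [PiLp.single_apply]
  rw [Finset.sum_congr rfl fun i _ => hterm i]
  simp only [Finset.sum_add_distrib, ← Finset.mul_sum, Finset.sum_const, Finset.card_univ,
    hsingle, hcoord, ← EuclideanSpace.real_norm_sq_eq, nsmul_eq_mul]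
  ring

theorem dotProduct_vecMul_of_apply_single_of_comm
    (L : EuclideanSpace ℝ ι → EuclideanSpace ℝ ι →L[ℝ] ℝ) (hL : ∀ v w, L v w = L w v)
    (x : EuclideanSpace ℝ ι) :
    x ⬝ᵥ (x ᵥ* of fun i j => L (EuclideanSpace.single j 1) (EuclideanSpace.single i 1)) =
      L x x := by
  have hsum (w : EuclideanSpace ℝ ι) : ∑ i, x i * L w (EuclideanSpace.single i 1) = L w x := by
    conv_rhs => rw [← (EuclideanSpace.basisFun ι ℝ).sum_repr x]
    simp [map_sum]
  simp only [dotProduct, vecMul, of_apply]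
  simp_rw [hsum, hL _ x, hsum]

theorem trace_one_add_smul_vecMulVec_mul_hessian_coordMulRadial {a b : ι} (hab : a ≠ b)
    {φ φ' : ℝ → ℝ} {φ'' : ℝ} {x : EuclideanSpace ℝ ι}
    (hφ : ∀ᶠ s in 𝓝 (‖x‖ ^ 2), HasDerivAt φ (φ' s) s) (hφ' : HasDerivAt φ' φ'' (‖x‖ ^ 2))
    (c : ℝ) :
    trace ((1 + c • vecMulVec x.ofLp x.ofLp) * of fun i j =>
        fderiv ℝ (fun y => fderiv ℝ (coordMulRadial a b φ) y (EuclideanSpace.single j 1)) x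
          (EuclideanSpace.single i 1)) =
      x a * x b * (4 * ‖x‖ ^ 2 * φ'' + (2 * Fintype.card ι + 8) * φ' (‖x‖ ^ 2)
        + c * (2 * φ (‖x‖ ^ 2) + 10 * ‖x‖ ^ 2 * φ' (‖x‖ ^ 2) + 4 * (‖x‖ ^ 2) ^ 2 * φ'')) := by
  rw [trace_one_add_smul_vecMulVec_mul,
    dotProduct_vecMul_of_apply_single_of_comm _ (fderiv_fderiv_coordMulRadial_comm a b hφ hφ'),
    fderiv_fderiv_coordMulRadial_apply a b hφ hφ', real_inner_self_eq_norm_sq]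
  simp only [trace, diag_apply, of_apply]
  rw [sum_fderiv_fderiv_coordMulRadial_single hab hφ hφ']
  ring

end Hessian

theorem log_div_sq_eq_two_mul_log_div (c r : ℝ) : log (c ^ 2 / r ^ 2) = 2 * log (c / r) := by
  rw [← div_pow, log_pow]
  norm_num

/-- With `α r = ((2+n) log (R/r) - 1) / ((log (R/r))² - 3 log (R/r) + 1)` and
`u x = x₁ x₂ (log (R/‖x‖))²`, the function `u` solves `L_α u = 0` in the punctured
unit ball: the trace of `(I + α(‖x‖) (x/‖x‖) ⊗ (x/‖x‖)) · D²u(x)` vanishes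
for `0 < ‖x‖ < 1`. -/
theorem bmo_counterexample_solves_equation
    (n : ℕ) (hn : 2 ≤ n) (R : ℝ) (hR : 1 < R)
    (hRbig : ∀ r ∈ Ioc (0 : ℝ) 1, 0 < (log (R / r)) ^ 2 - 3 * log (R / r) + 1)
    (α : ℝ → ℝ)
    (hα : ∀ r ∈ Ioc (0 : ℝ) 1,
      α r = ((2 + (n : ℝ)) * log (R / r) - 1) /
        ((log (R / r)) ^ 2 - 3 * log (R / r) + 1))
    (u : EuclideanSpace ℝ (Fin n) → ℝ)
    (hu : ∀ x, u x = x (⟨0, by omega⟩ : Fin n) * x (⟨1, by omega⟩ : Fin n) *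
      (log (R / ‖x‖)) ^ 2) :
    ∀ x : EuclideanSpace ℝ (Fin n), 0 < ‖x‖ → ‖x‖ < 1 →
      Matrix.trace
        ((Matrix.of fun i j : Fin n =>
            (if i = j then (1 : ℝ) else 0) + α ‖x‖ * (x i / ‖x‖) * (x j / ‖x‖)) *
          (Matrix.of fun i j : Fin n =>
            fderiv ℝ (fun y => fderiv ℝ u y (EuclideanSpace.single j 1)) x
              (EuclideanSpace.single i 1)))
        = 0 := by
  intro x hx0 hx1
  have hR2 : R ^ 2 ≠ 0 := pow_ne_zero 2 (zero_lt_one.trans hR).ne'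
  have hu' : u = coordMulRadial ⟨0, by omega⟩ ⟨1, by omega⟩ fun s => log (R ^ 2 / s) ^ 2 / 4 := by
    funext y
    rw [hu, coordMulRadial, log_div_sq_eq_two_mul_log_div]
    ring
  have hmat : (Matrix.of fun i j : Fin n =>
      (if i = j then (1 : ℝ) else 0) + α ‖x‖ * (x i / ‖x‖) * (x j / ‖x‖)) =
      1 + (α ‖x‖ / ‖x‖ ^ 2) • vecMulVec x.ofLp x.ofLp := by
    ext i j
    simp only [of_apply, Matrix.add_apply, one_apply, Matrix.smul_apply, vecMulVec_apply,
      smul_eq_mul]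
    field_simp
  have hq : ‖x‖ ^ 2 ≠ 0 := pow_ne_zero 2 hx0.ne'
  have hφ : ∀ᶠ s in 𝓝 (‖x‖ ^ 2), HasDerivAt (fun s => log (R ^ 2 / s) ^ 2 / 4)
      (-log (R ^ 2 / s) / (2 * s)) s := by
    filter_upwards [eventually_ne_nhds hq] with s hs
    exact hasDerivAt_log_const_div_sq_div_four hR2 hs
  rw [hmat, hu', trace_one_add_smul_vecMulVec_mul_hessian_coordMulRadial (by simp [Fin.ext_iff]) hφ
    (hasDerivAt_neg_log_const_div_div_two_mul hR2 hq), log_div_sq_eq_two_mul_log_div,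
    Fintype.card_fin]
  have hα' : α ‖x‖ * (log (R / ‖x‖) ^ 2 - 3 * log (R / ‖x‖) + 1) =
      (2 + n) * log (R / ‖x‖) - 1 := by
    rw [hα ‖x‖ ⟨hx0, hx1.le⟩, div_mul_cancel₀ _ (hRbig ‖x‖ ⟨hx0, hx1.le⟩).ne']
  field_simp
  linear_combination 16 * (x ⟨0, by omega⟩ * x ⟨1, by omega⟩) * hα'
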